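/- Let A₁ be a compact convex subset of a finite-dimensional real vector space, let B be a compact convex set, and for each a₁ ∈ A₁ let A(a₁) be the slice {a ∈ A : π(a) = a₁} of a compact convex set A under a linear map π, assumed nonempty. Suppose f(a, b) is bilinear on A × B. Then max_{a₁∈A₁} min_{b∈B} max_{a∈A(a₁)} f(a,b) = max_{a∈A} min_{b∈B} f(a,b). -/

import Mathlib

open Set Finset

/-- von Neumann minimax for a bilinear payoff on compact convex sets in
finite-dimensional spaces. -/
theorem bilinear_minimax {E F : Type*}
    [NormedAddCommGroup E] [NormedSpace ℝ E] [FiniteDimensional ℝ E]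
    [NormedAddCommGroup F] [NormedSpace ℝ F] [FiniteDimensional ℝ F]
    (A : Set E) (B : Set F)
    (hAne : A.Nonempty) (hAcp : IsCompact A) (hAcv : Convex ℝ A)
    (hBne : B.Nonempty) (hBcp : IsCompact B) (hBcv : Convex ℝ B)
    (f : E → F → ℝ)
    (hf₁ : ∀ b, IsLinearMap ℝ fun a => f a b)
    (hf₂ : ∀ a, IsLinearMap ℝ fun b => f a b) :
    sInf ((fun b => sSup ((fun a => f a b) '' A)) '' B)
      = sSup ((fun a => sInf ((fun b => f a b) '' B)) '' A) := by
  classical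
  obtain ⟨a₀, ha₀⟩ := hAne
  have hAne : A.Nonempty := ⟨a₀, ha₀⟩
  obtain ⟨b₀, hb₀⟩ := hBne
  have hBne : B.Nonempty := ⟨b₀, hb₀⟩
  have hcontA : ∀ b, Continuous fun a => f a b := fun b =>
    (IsLinearMap.mk' _ (hf₁ b)).continuous_of_finiteDimensional
  have hcontB : ∀ a, Continuous fun b => f a b := fun a =>
    (IsLinearMap.mk' _ (hf₂ a)).continuous_of_finiteDimensional
  set g : E → ℝ := fun a => sInf ((fun b => f a b) '' B) with hg
  set S : F → ℝ := fun b => sSup ((fun a => f a b) '' A) with hS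
  have hbddB : ∀ a, BddBelow ((fun b => f a b) '' B) := fun a =>
    (hBcp.image (hcontB a)).bddBelow
  have hbddA : ∀ b, BddAbove ((fun a => f a b) '' A) := fun b =>
    (hAcp.image (hcontA b)).bddAbove
  -- g a ≤ S b for all a ∈ A, b ∈ B
  have hgS : ∀ a ∈ A, ∀ b ∈ B, g a ≤ S b := fun a ha b hb =>
    le_trans (csInf_le (hbddB a) ⟨b, hb, rfl⟩) (le_csSup (hbddA b) ⟨a, ha, rfl⟩)
  -- boundedness of g '' A above, S '' B below
  have hgA_bdd : BddAbove (g '' A) := by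
    refine ⟨S b₀, ?_⟩
    rintro y ⟨a, ha, rfl⟩
    exact hgS a ha b₀ hb₀
  have hSB_bdd : BddBelow (S '' B) := by
    refine ⟨g a₀, ?_⟩
    rintro y ⟨b, hb, rfl⟩
    exact hgS a₀ ha₀ b hb
  apply le_antisymm
  · -- hard direction
    by_contra hlt
    push_neg at hlt
    obtain ⟨c, hc1, hc2⟩ := exists_between hlt
    -- hc1 : sSup (g '' A) < c, hc2 : c < sInf (S '' B)
    set T : B → Set E := fun b => {a | c ≤ f a (b : F)} with hT
    have hTclosed : ∀ b : B, IsClosed (T b) := fun b =>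
      isClosed_le continuous_const (hcontA b)
    have hempty : A ∩ ⋂ b : B, T b = ∅ := by
      by_contra hne
      obtain ⟨a, haA, haT⟩ := Set.nonempty_iff_ne_empty.2 hne
      have hga : c ≤ g a := by
        apply le_csInf (hBne.image _)
        rintro y ⟨b, hb, rfl⟩
        exact (Set.mem_iInter.1 haT ⟨b, hb⟩ : c ≤ f a b)
      exact absurd (hga.trans (le_csSup hgA_bdd ⟨a, haA, rfl⟩)) (not_le.2 hc1)
    obtain ⟨u, hu⟩ := hAcp.elim_finite_subfamily_closed T hTclosed hempty
    rcases u.eq_empty_or_nonempty with rfl | hune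
    · simp at hu
      exact absurd hu (Set.nonempty_iff_ne_empty.1 ⟨a₀, ha₀⟩)
    have : Nonempty ↥u := hune.to_subtype
    -- the finite-dimensional separation argument
    set Φ : E →ₗ[ℝ] (↥u → ℝ) :=
      LinearMap.pi (fun i => IsLinearMap.mk' _ (hf₁ ((i : B) : F))) with hΦ
    have hΦa : ∀ (a : E) (i : ↥u), Φ a i = f a ((i : B) : F) := fun a i => rfl
    set K : Set (↥u → ℝ) := Φ '' A with hK
    set Q : Set (↥u → ℝ) := Set.univ.pi (fun _ => Set.Ici c) with hQ
    have hQmem : ∀ x, x ∈ Q ↔ ∀ i, c ≤ x i := by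
      intro x
      rw [hQ, Set.mem_univ_pi]
      simp only [Set.mem_Ici]
    have hKQ : Disjoint K Q := by
      rw [Set.disjoint_left]
      rintro x ⟨a, ha, rfl⟩ hxQ
      have : a ∈ A ∩ ⋂ b ∈ u, T b := by
        refine ⟨ha, ?_⟩
        rw [Set.mem_iInter₂]
        intro b hb
        exact (hQmem _).1 hxQ ⟨b, hb⟩
      rw [hu] at this
      exact this
    obtain ⟨φ, r, s, hφK, hrs, hφQ⟩ :=
      geometric_hahn_banach_compact_closed (hAcv.linear_image Φ)
        (hAcp.image Φ.continuous_of_finiteDimensional)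
        (convex_pi fun _ _ => convex_Ici c)
        (isClosed_set_pi fun _ _ => isClosed_Ici) hKQ
    set lam : ↥u → ℝ := fun i => φ (Pi.single i 1) with hlam
    have hφx : ∀ x : ↥u → ℝ, φ x = ∑ i, x i * lam i := by
      intro x
      have hx : x = ∑ i, x i • (Pi.single i (1 : ℝ) : ↥u → ℝ) := by
        ext j
        simp [Pi.single_apply, Finset.sum_apply, Finset.sum_ite_eq]
      calc φ x = φ (∑ i, x i • (Pi.single i (1 : ℝ) : ↥u → ℝ)) := by rw [← hx]
        _ = ∑ i, x i * lam i := by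
            rw [map_sum]; congr 1; ext i; rw [map_smul]; simp [hlam]
    have hcQ : (fun _ : ↥u => c) ∈ Q := (hQmem _).2 fun i => le_refl c
    have hlam0 : ∀ i, 0 ≤ lam i := by
      intro i
      by_contra hneg
      push_neg at hneg
      set t : ℝ := max 0 ((s - φ (fun _ => c)) / lam i) with ht
      set y : ↥u → ℝ := (fun _ : ↥u => c) + t • (Pi.single i (1:ℝ) : ↥u → ℝ) with hy
      have htQ : y ∈ Q := by
        rw [hQmem]
        intro j
        have h0 : (0:ℝ) ≤ (t • (Pi.single i (1:ℝ) : ↥u → ℝ)) j := by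
          rcases eq_or_ne i j with rfl | hij
          · have h1 : (t • (Pi.single i (1:ℝ) : ↥u → ℝ)) i = t := by simp
            rw [h1, ht]
            exact le_max_left _ _
          · simp [Pi.single_apply, hij]
        have : y j = c + (t • (Pi.single i (1:ℝ) : ↥u → ℝ)) j := rfl
        rw [this]
        linarith
      have h1 : s < φ (fun _ => c) + t * lam i := by
        have := hφQ _ htQ
        rw [hy, map_add, map_smul, smul_eq_mul] at this
        exact this
      have h2 : t * lam i ≤ s - φ (fun _ => c) := by
        have : (s - φ (fun _ => c)) / lam i ≤ t := le_max_right _ _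
        calc t * lam i ≤ ((s - φ (fun _ => c)) / lam i) * lam i :=
              mul_le_mul_of_nonpos_right this hneg.le
          _ = s - φ (fun _ => c) := div_mul_cancel₀ _ hneg.ne
      linarith
    set Ssum : ℝ := ∑ i, lam i with hSsum
    have hSsum0 : 0 < Ssum := by
      rcases (Finset.sum_nonneg fun i _ => hlam0 i).lt_or_eq with h | h
      · exact h
      have hall : ∀ i ∈ Finset.univ, lam i = 0 :=
        (Finset.sum_eq_zero_iff_of_nonneg fun i _ => hlam0 i).1 h.symm
      have hzero : ∀ x : ↥u → ℝ, φ x = 0 := by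
        intro x
        rw [hφx]
        exact Finset.sum_eq_zero fun i hi => by rw [hall i hi, mul_zero]
      have h1 : (0:ℝ) < r := by
        have := hφK _ ⟨a₀, ha₀, rfl⟩
        rwa [hzero] at this
      have h2 : s < 0 := by
        have := hφQ _ hcQ
        rw [hzero] at this; linarith
      linarith
    have hcs : s < c * Ssum := by
      have := hφQ _ hcQ
      rwa [hφx, ← Finset.mul_sum] at this
    set bstar : F := ∑ i : ↥u, (lam i / Ssum) • ((i : B) : F) with hbstar
    have hbstarB : bstar ∈ B := by
      apply hBcv.sum_mem (fun i _ => div_nonneg (hlam0 i) hSsum0.le)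
      · rw [← Finset.sum_div, div_self hSsum0.ne']
      · exact fun i _ => (i : B).2
    have hfb : ∀ a ∈ A, f a bstar < c := by
      intro a ha
      have h1 : f a bstar = (∑ i, lam i * f a ((i : B) : F)) / Ssum := by
        rw [hbstar]
        rw [show f a (∑ i : ↥u, (lam i / Ssum) • ((i : B) : F))
            = ∑ i : ↥u, (lam i / Ssum) * f a ((i : B) : F) from by
          show (IsLinearMap.mk' _ (hf₂ a)) (∑ i : ↥u, (lam i / Ssum) • ((i : B) : F)) = _
          rw [map_sum]
          simp only [map_smul, smul_eq_mul, IsLinearMap.mk'_apply]]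
        rw [Finset.sum_div]
        congr 1; ext i; ring
      have h2 : ∑ i, lam i * f a ((i : B) : F) < c * Ssum := by
        have := hφK _ ⟨a, ha, rfl⟩
        rw [hφx] at this
        have heq : ∑ i, Φ a i * lam i = ∑ i, lam i * f a ((i : B) : F) := by
          congr 1; ext i; rw [hΦa]; ring
        rw [heq] at this
        linarith
      rw [h1]
      rw [div_lt_iff₀ hSsum0]
      linarith [h2]
    have hSb : S bstar ≤ c := by
      apply csSup_le (hAne.image _)
      rintro y ⟨a, ha, rfl⟩
      exact (hfb a ha).le
    have : sInf (S '' B) ≤ c := le_trans (csInf_le hSB_bdd ⟨bstar, hbstarB, rfl⟩) hSb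
    linarith
  · -- easy direction: sSup (g '' A) ≤ sInf (S '' B)
    apply csSup_le (hAne.image _)
    rintro y ⟨a, ha, rfl⟩
    apply le_csInf (hBne.image _)
    rintro z ⟨b, hb, rfl⟩
    exact hgS a ha b hb


/-- Abstract QEPH collapse step: with `A₁ = π(A)` and slices `A(a₁) = {a ∈ A | π a = a₁}`
(compact and convex), for a bilinear payoff `f`,
`max_{a₁∈π(A)} min_{b∈B} max_{a∈A(a₁)} f(a,b) = max_{a∈A} min_{b∈B} f(a,b)`. -/
theorem collapse_nested_max {E E₁ F : Type*}
    [NormedAddCommGroup E] [NormedSpace ℝ E] [FiniteDimensional ℝ E]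
    [NormedAddCommGroup E₁] [NormedSpace ℝ E₁] [FiniteDimensional ℝ E₁]
    [NormedAddCommGroup F] [NormedSpace ℝ F] [FiniteDimensional ℝ F]
    (π : E →ₗ[ℝ] E₁)
    (A : Set E) (B : Set F)
    (hAne : A.Nonempty) (hAcp : IsCompact A) (hAcv : Convex ℝ A)
    (hBne : B.Nonempty) (hBcp : IsCompact B) (hBcv : Convex ℝ B)
    (f : E → F → ℝ)
    (hf₁ : ∀ b, IsLinearMap ℝ fun a => f a b)
    (hf₂ : ∀ a, IsLinearMap ℝ fun b => f a b) :
    sSup ((fun a₁ => sInf ((fun b =>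
        sSup ((fun a => f a b) '' {a | a ∈ A ∧ π a = a₁})) '' B)) '' (π '' A))
      = sSup ((fun a => sInf ((fun b => f a b) '' B)) '' A) := by
  obtain ⟨b₀, hb₀⟩ := hBne
  have hBne : B.Nonempty := ⟨b₀, hb₀⟩
  have hcontA : ∀ b, Continuous fun a => f a b := fun b =>
    (IsLinearMap.mk' _ (hf₁ b)).continuous_of_finiteDimensional
  have hcontB : ∀ a, Continuous fun b => f a b := fun a =>
    (IsLinearMap.mk' _ (hf₂ a)).continuous_of_finiteDimensional
  set g : E → ℝ := fun a => sInf ((fun b => f a b) '' B) with hg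
  -- properties of slices
  set Sl : E₁ → Set E := fun a₁ => {a | a ∈ A ∧ π a = a₁} with hSl
  have hSlsub : ∀ a₁, Sl a₁ ⊆ A := fun a₁ a ha => ha.1
  have hSlcp : ∀ a₁, IsCompact (Sl a₁) := by
    intro a₁
    have : Sl a₁ = A ∩ (⇑π) ⁻¹' {a₁} := by
      ext a; simp [hSl, Set.mem_preimage]
    rw [this]
    exact hAcp.inter_right (isClosed_singleton.preimage π.continuous_of_finiteDimensional)
  have hSlcv : ∀ a₁, Convex ℝ (Sl a₁) := by
    intro a₁
    intro x hx y hy s t hs ht hst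
    refine ⟨hAcv hx.1 hy.1 hs ht hst, ?_⟩
    have : π (s • x + t • y) = s • π x + t • π y := by
      rw [map_add, map_smul, map_smul]
    rw [this, hx.2, hy.2, ← add_smul, hst, one_smul]
  have hSlne : ∀ a₁ ∈ π '' A, (Sl a₁).Nonempty := by
    rintro a₁ ⟨a, ha, rfl⟩
    exact ⟨a, ha, rfl⟩
  -- apply minimax on each slice
  have hmm : ∀ a₁ ∈ π '' A,
      sInf ((fun b => sSup ((fun a => f a b) '' Sl a₁)) '' B)
        = sSup (g '' Sl a₁) := fun a₁ ha₁ =>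
    bilinear_minimax (Sl a₁) B (hSlne a₁ ha₁) (hSlcp a₁) (hSlcv a₁)
      hBne hBcp hBcv f hf₁ hf₂
  -- boundedness of g on A
  have hgA_bdd : BddAbove (g '' A) := by
    obtain ⟨M, hM⟩ := (hAcp.image (hcontA b₀)).bddAbove
    refine ⟨M, ?_⟩
    rintro y ⟨a, ha, rfl⟩
    exact le_trans (csInf_le (hBcp.image (hcontB a)).bddBelow ⟨b₀, hb₀, rfl⟩)
      (hM ⟨a, ha, rfl⟩)
  have hgSl_bdd : ∀ a₁, BddAbove (g '' Sl a₁) :=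
    fun a₁ => hgA_bdd.mono (Set.image_mono (f := g) (hSlsub a₁))
  obtain ⟨a₀, ha₀⟩ := hAne
  have hAne : A.Nonempty := ⟨a₀, ha₀⟩
  -- outer sup bound
  have houter_bdd : BddAbove ((fun a₁ => sInf ((fun b =>
      sSup ((fun a => f a b) '' Sl a₁)) '' B)) '' (π '' A)) := by
    refine ⟨sSup (g '' A), ?_⟩
    rintro y ⟨a₁, ha₁, rfl⟩
    dsimp only
    rw [hmm a₁ ha₁]
    exact csSup_le_csSup hgA_bdd ((hSlne a₁ ha₁).image g)
      (Set.image_mono (f := g) (hSlsub a₁))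
  apply le_antisymm
  · apply csSup_le ((hAne.image π).image _)
    rintro y ⟨a₁, ha₁, rfl⟩
    dsimp only
    rw [hmm a₁ ha₁]
    exact csSup_le_csSup hgA_bdd ((hSlne a₁ ha₁).image g)
      (Set.image_mono (f := g) (hSlsub a₁))
  · apply csSup_le (hAne.image g)
    rintro y ⟨a, ha, rfl⟩
    have h1 : g a ≤ sSup (g '' Sl (π a)) :=
      le_csSup (hgSl_bdd (π a)) ⟨a, ⟨ha, rfl⟩, rfl⟩
    have h2 : sSup (g '' Sl (π a))
        ≤ sSup ((fun a₁ => sInf ((fun b =>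
          sSup ((fun a' => f a' b) '' Sl a₁)) '' B)) '' (π '' A)) := by
      rw [← hmm (π a) ⟨a, ha, rfl⟩]
      exact le_csSup houter_bdd ⟨π a, ⟨a, ha, rfl⟩, rfl⟩
    exact h1.trans h2
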